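/- arXiv:0912.2469 — 3 statements merged into one kernel-verified Lean document; each statement's English description precedes it below -/
import Mathlib

section
/- Let G be an abelian group, n > 0, k_1,…,k_s ∈ ℤ^n, and m_1,…,m_t positive integers such that G^{[m_j]} has finite index in G for each j. Then every boolean combination of cosets (in G^n) of the subgroups D_{k_i, m_j} is a finite union of cosets of (G^{[l]})^n, where l is the least common multiple of m_1,…,m_t. -/
/-
D_{k,m} is the preimage of G^{[m]} under the character χ_k, hence a subgroup of G^n
containing H = (G^{[l]})^n whenever m ∣ l. So its translates, and then all their boolean
combinations, are preimages of subsets of G^n/H. This quotient is finite: G^{[ab]} is the image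
of G^{[a]} under x ↦ x^b, so [G : G^{[ab]}] is finite when [G : G^{[a]}] and
[G : G^{[b]}] are, and G^{[l]} ⊇ G^{[m_1 ⋯ m_t]}.
-/

open Pointwise

/-- Boolean combinations of a family of basic sets: closed under complement (within the
ambient type, here G^n), union, and intersection. -/
inductive BoolComb {α : Type*} (B : Set (Set α)) : Set α → Prop
  | base {s : Set α} : s ∈ B → BoolComb B s
  | compl {s : Set α} : BoolComb B s → BoolComb B sᶜ
  | union {s t : Set α} : BoolComb B s → BoolComb B t → BoolComb B (s ∪ t)
  | inter {s t : Set α} : BoolComb B s → BoolComb B t → BoolComb B (s ∩ t)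

/-- The subgroup G^{[m]} = {g^m : g ∈ G}. -/
def powSubgroup (G : Type*) [CommGroup G] (m : ℕ) : Subgroup G :=
  (powMonoidHom m : G →* G).range

/-- The set D_{k,m} = {g ∈ G^n : χ_k(g) ∈ G^{[m]}}. -/
def Dset {G : Type*} [CommGroup G] {n : ℕ} (k : Fin n → ℤ) (m : ℕ) : Set (Fin n → G) :=
  {g : Fin n → G | ∏ i, g i ^ k i ∈ powSubgroup G m}

section powSubgroup

variable {G : Type*} [CommGroup G]

lemma powSubgroup_le_of_dvd {a b : ℕ} (h : a ∣ b) : powSubgroup G b ≤ powSubgroup G a := by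
  obtain ⟨c, rfl⟩ := h
  rintro x ⟨y, rfl⟩
  exact ⟨y ^ c, by simp [powMonoidHom, pow_mul, mul_comm a c]⟩

lemma powSubgroup_one : powSubgroup G 1 = ⊤ := by
  ext x
  simp [powSubgroup]

lemma powSubgroup_mul (a b : ℕ) :
    powSubgroup G (a * b) = (powSubgroup G a).map (powMonoidHom b) := by
  rw [powSubgroup, powSubgroup, ← MonoidHom.range_comp]
  congr 1
  ext x
  simp [pow_mul]

lemma finiteIndex_powSubgroup_mul {a b : ℕ} [(powSubgroup G a).FiniteIndex]
    [(powSubgroup G b).FiniteIndex] : (powSubgroup G (a * b)).FiniteIndex := by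
  have : (powSubgroup G a ⊔ (powMonoidHom b : G →* G).ker).FiniteIndex :=
    Subgroup.finiteIndex_of_le le_sup_left
  constructor
  rw [powSubgroup_mul, Subgroup.index_map]
  exact mul_ne_zero Subgroup.FiniteIndex.index_ne_zero
    (Subgroup.FiniteIndex.index_ne_zero (H := powSubgroup G b))

lemma finiteIndex_powSubgroup_lcm {ι : Type*} (s : Finset ι) (m : ι → ℕ)
    (h : ∀ j ∈ s, (powSubgroup G (m j)).FiniteIndex) :
    (powSubgroup G (s.lcm m)).FiniteIndex := by
  have : (powSubgroup G (∏ j ∈ s, m j)).FiniteIndex := by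
    refine Finset.prod_induction m (fun c => (powSubgroup G c).FiniteIndex)
      (fun _ _ _ _ => finiteIndex_powSubgroup_mul) ?_ h
    rw [powSubgroup_one]
    infer_instance
  exact Subgroup.finiteIndex_of_le (powSubgroup_le_of_dvd (Finset.lcm_dvd_prod s m))

end powSubgroup

section Character

variable {G ι : Type*} [CommGroup G] [Fintype ι]

def character (k : ι → ℤ) : (ι → G) →* G :=
  MonoidHom.mk' (fun g => ∏ i, g i ^ k i) fun _ _ => by
    simp only [Pi.mul_apply, mul_zpow, Finset.prod_mul_distrib]

lemma Dset_eq_comap {n : ℕ} (k : Fin n → ℤ) (m : ℕ) :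
    Dset k m = ((powSubgroup G m).comap (character k) : Set (Fin n → G)) := rfl

lemma pi_powSubgroup_le_comap_character (k : ι → ℤ) {m l : ℕ} (h : m ∣ l) :
    Subgroup.pi Set.univ (fun _ : ι => powSubgroup G l) ≤
      (powSubgroup G m).comap (character k) := fun _ hg =>
  Subgroup.prod_mem _ fun i _ =>
    Subgroup.zpow_mem _ (powSubgroup_le_of_dvd h (hg i (Set.mem_univ i))) _

end Character

section Saturated

variable {α : Type*} [Group α] {H : Subgroup α}

lemma preimage_mk_singleton_mk (a : α) :
    QuotientGroup.mk ⁻¹' {(a : α ⧸ H)} = a • (H : Set α) := by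
  ext x
  simp only [Set.mem_preimage, Set.mem_singleton_iff, Set.mem_smul_set_iff_inv_smul_mem,
    smul_eq_mul, eq_comm (a := (x : α ⧸ H)), QuotientGroup.eq, SetLike.mem_coe]

lemma preimage_image_mk_smul_of_le {K : Subgroup α} (hHK : H ≤ K) (a : α) :
    QuotientGroup.mk ⁻¹' ((QuotientGroup.mk : α → α ⧸ H) '' (a • (K : Set α))) =
      a • (K : Set α) := by
  rw [QuotientGroup.preimage_image_mk_eq_mul, smul_mul_assoc]
  congr 1
  exact (Set.mul_subset_iff.2 fun _ hx _ hy => K.mul_mem hx (hHK hy)).antisymm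
    (Set.subset_mul_left _ H.one_mem)

lemma exists_finset_preimage_mk_eq_iUnion [H.FiniteIndex] (S : Set (α ⧸ H)) :
    ∃ T : Finset α, QuotientGroup.mk ⁻¹' S = ⋃ a ∈ T, a • (H : Set α) := by
  classical
  refine ⟨S.toFinite.toFinset.image Quotient.out, ?_⟩
  simp only [Finset.set_biUnion_finset_image, ← preimage_mk_singleton_mk,
    QuotientGroup.out_eq', Set.Finite.mem_toFinset, ← Set.preimage_iUnion₂]
  exact congrArg _ (Set.biUnion_of_singleton S).symm

end Saturated

lemma BoolComb.exists_eq_preimage {α β : Type*} {B : Set (Set α)} {f : α → β}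
    (hB : ∀ s ∈ B, ∃ S, s = f ⁻¹' S) {X : Set α} (hX : BoolComb B X) :
    ∃ S, X = f ⁻¹' S := by
  induction hX with
  | base hs => exact hB _ hs
  | compl _ ih =>
    obtain ⟨S, rfl⟩ := ih
    exact ⟨Sᶜ, rfl⟩
  | union _ _ ih₁ ih₂ =>
    obtain ⟨S₁, rfl⟩ := ih₁
    obtain ⟨S₂, rfl⟩ := ih₂
    exact ⟨S₁ ∪ S₂, rfl⟩
  | inter _ _ ih₁ ih₂ =>
    obtain ⟨S₁, rfl⟩ := ih₁
    obtain ⟨S₂, rfl⟩ := ih₂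
    exact ⟨S₁ ∩ S₂, rfl⟩

theorem stmt3_general {G : Type*} [CommGroup G] (n : ℕ) (s t : ℕ)
    (k : Fin s → Fin n → ℤ) (m : Fin t → ℕ)
    (hfi : ∀ j, (powSubgroup G (m j)).FiniteIndex)
    (X : Set (Fin n → G))
    (hX : BoolComb
      {C : Set (Fin n → G) | ∃ (i : Fin s) (j : Fin t) (a : Fin n → G),
        C = a • Dset (k i) (m j)} X) :
    ∃ T : Finset (Fin n → G),
      X = ⋃ a ∈ T, a • ((Subgroup.pi Set.univ fun _ : Fin n =>
        powSubgroup G (Finset.univ.lcm m)) : Set (Fin n → G)) := by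
  set l := Finset.univ.lcm m
  set H : Subgroup (Fin n → G) := Subgroup.pi Set.univ fun _ => powSubgroup G l
  have : (powSubgroup G l).FiniteIndex := finiteIndex_powSubgroup_lcm _ m fun j _ => hfi j
  have : H.FiniteIndex :=
    ⟨by
      rw [Subgroup.index_pi]
      exact Finset.prod_ne_zero_iff.2 fun _ _ => Subgroup.FiniteIndex.index_ne_zero⟩
  obtain ⟨S, rfl⟩ : ∃ S : Set ((Fin n → G) ⧸ H), X = QuotientGroup.mk ⁻¹' S := by
    refine hX.exists_eq_preimage ?_
    rintro _ ⟨i, j, a, rfl⟩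
    have hHD : H ≤ (powSubgroup G (m j)).comap (character (k i)) :=
      pi_powSubgroup_le_comap_character (k i) (Finset.dvd_lcm (Finset.mem_univ j))
    rw [Dset_eq_comap]
    exact ⟨_, (preimage_image_mk_smul_of_le hHD a).symm⟩
  exact exists_finset_preimage_mk_eq_iUnion S

/-- every boolean combination of cosets of the D_{k_i,m_j} in G^n is a
finite union of cosets of (G^{[l]})^n, where l = lcm(m_1,…,m_t). -/
theorem stmt3 {G : Type*} [CommGroup G] (n : ℕ) (hn : 0 < n) (s t : ℕ)
    (k : Fin s → Fin n → ℤ) (m : Fin t → ℕ) (hm : ∀ j, 0 < m j)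
    (hfi : ∀ j, (powSubgroup G (m j)).FiniteIndex)
    (X : Set (Fin n → G))
    (hX : BoolComb
      {C : Set (Fin n → G) | ∃ (i : Fin s) (j : Fin t) (a : Fin n → G),
        C = a • Dset (k i) (m j)} X) :
    ∃ T : Finset (Fin n → G),
      X = ⋃ a ∈ T, a • ((Subgroup.pi Set.univ fun _ : Fin n =>
        powSubgroup G (Finset.univ.lcm m)) : Set (Fin n → G)) :=
  stmt3_general n s t k m hfi X hX
end

section
/- Let cl be a pregeometry (closure operator with finite character and Steinitz exchange) on a set M, let G ⊆ M, let H ⊆ G, and let A ⊆ M be cl-independent over G. Suppose cl(H) ∩ G = H. Then cl(A ∪ H) ∩ G = H. -/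
/-!
Reduce to a finite part `F` of `A` and add its elements one at a time. If adding `a` is what
first puts `g ∈ G` into the closure, exchange puts `a` into the closure of `g`, `H` and the rest of
`F`, all of which lie in `G ∪ (A \ {a})`, contradicting independence. Hence
`cl (A ∪ H) ∩ G ⊆ cl H ∩ G = H`.
-/

namespace Pregeometry

def IndepOver {M : Type*} (cl : Set M → Set M) (C A : Set M) : Prop :=
  ∀ a ∈ A, a ∉ cl (C ∪ (A \ {a}))

variable {M : Type*} {cl : Set M → Set M}

theorem monotone_of_finite_character
    (hfin : ∀ (A : Set M) (b : M), b ∈ cl A ↔ ∃ A₀ : Set M, A₀ ⊆ A ∧ A₀.Finite ∧ b ∈ cl A₀) :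
    Monotone cl := fun X Y hXY b hb => by
  obtain ⟨X₀, hX₀, hX₀fin, hbX₀⟩ := (hfin X b).1 hb
  exact (hfin Y b).2 ⟨X₀, hX₀.trans hXY, hX₀fin, hbX₀⟩

theorem mem_cl_of_mem_cl_finite_union
    (hfin : ∀ (A : Set M) (b : M), b ∈ cl A ↔ ∃ A₀ : Set M, A₀ ⊆ A ∧ A₀.Finite ∧ b ∈ cl A₀)
    (hexch : ∀ (A : Set M) (a b : M), b ∈ cl (A ∪ {a}) → b ∉ cl A → a ∈ cl (A ∪ {b}))
    {C A X F : Set M} {b : M} (hind : IndepOver cl C A) (hXC : X ⊆ C) (hbC : b ∈ C)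
    (hF : F.Finite) (hFA : F ⊆ A) (hb : b ∈ cl (F ∪ X)) : b ∈ cl X := by
  have hmono := monotone_of_finite_character hfin
  induction F, hF using Set.Finite.induction_on with
  | empty => simpa using hb
  | @insert a F haF _ ih =>
    have hFA' : F ⊆ A := (Set.subset_insert a F).trans hFA
    by_contra hbX
    have hbF : b ∉ cl (F ∪ X) := fun h => hbX (ih hFA' h)
    have haA : a ∈ A := hFA (Set.mem_insert a F)
    have hb' : b ∈ cl ((F ∪ X) ∪ {a}) := by
      convert hb using 2
      rw [Set.insert_union, Set.union_singleton]
    have hab : a ∈ cl ((F ∪ X) ∪ {b}) := hexch _ _ _ hb' hbF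
    refine hind a haA (hmono ?_ hab)
    rintro x ((hxF | hxX) | rfl)
    · exact Or.inr ⟨hFA' hxF, fun hxa => haF (hxa ▸ hxF)⟩
    · exact Or.inl (hXC hxX)
    · exact Or.inl hbC

theorem cl_union_inter_subset
    (hfin : ∀ (A : Set M) (b : M), b ∈ cl A ↔ ∃ A₀ : Set M, A₀ ⊆ A ∧ A₀.Finite ∧ b ∈ cl A₀)
    (hexch : ∀ (A : Set M) (a b : M), b ∈ cl (A ∪ {a}) → b ∉ cl A → a ∈ cl (A ∪ {b}))
    {C A X : Set M} (hind : IndepOver cl C A) (hXC : X ⊆ C) :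
    cl (A ∪ X) ∩ C ⊆ cl X := by
  rintro b ⟨hb, hbC⟩
  obtain ⟨B, hBAX, hBfin, hbB⟩ := (hfin _ b).1 hb
  have hB : B ⊆ (B ∩ A) ∪ X := fun x hx =>
    (hBAX hx).elim (fun hxA => Or.inl ⟨hx, hxA⟩) Or.inr
  exact mem_cl_of_mem_cl_finite_union hfin hexch hind hXC hbC (hBfin.inter_of_left A)
    Set.inter_subset_right (monotone_of_finite_character hfin hB hbB)

end Pregeometry

open Pregeometry in
theorem stmt13_general {M : Type*} (cl : Set M → Set M)
    (hsub : ∀ A : Set M, A ⊆ cl A)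
    (hfin : ∀ (A : Set M) (b : M), b ∈ cl A ↔ ∃ A₀ : Set M, A₀ ⊆ A ∧ A₀.Finite ∧ b ∈ cl A₀)
    (hexch : ∀ (A : Set M) (a b : M), b ∈ cl (A ∪ {a}) → b ∉ cl A → a ∈ cl (A ∪ {b}))
    (G H : Set M) (hHG : H ⊆ G) (A : Set M)
    (hind : ∀ a ∈ A, a ∉ cl (G ∪ (A \ {a})))
    (hclH : cl H ∩ G = H) :
    cl (A ∪ H) ∩ G = H := by
  apply Set.Subset.antisymm
  · calc cl (A ∪ H) ∩ G ⊆ cl H ∩ G :=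
          Set.subset_inter (cl_union_inter_subset hfin hexch hind hHG) Set.inter_subset_right
      _ = H := hclH
  · exact Set.subset_inter
      ((hsub H).trans (monotone_of_finite_character hfin Set.subset_union_right)) hHG

/-- Let cl be a pregeometry on M, G ⊆ M, H ⊆ G, and A ⊆ M cl-independent
over G. If cl(H) ∩ G = H, then cl(A ∪ H) ∩ G = H. -/
theorem stmt13 {M : Type*} (cl : Set M → Set M)
    (hsub : ∀ A : Set M, A ⊆ cl A)
    (hfin : ∀ (A : Set M) (b : M), b ∈ cl A ↔ ∃ A₀ : Set M, A₀ ⊆ A ∧ A₀.Finite ∧ b ∈ cl A₀)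
    (hidem : ∀ A : Set M, cl (cl A) = cl A)
    (hexch : ∀ (A : Set M) (a b : M), b ∈ cl (A ∪ {a}) → b ∉ cl A → a ∈ cl (A ∪ {b}))
    (G H : Set M) (hHG : H ⊆ G) (A : Set M)
    (hind : ∀ a ∈ A, a ∉ cl (G ∪ (A \ {a})))
    (hclH : cl H ∩ G = H) :
    cl (A ∪ H) ∩ G = H :=
  stmt13_general cl hsub hfin hexch G H hHG A hind hclH
end

section
/- Let K be a field, M a field extension of K, and consider, for a ∈ M_{>0}^n, b ∈ M^m (in an ordered field setting with well-defined powers a^q for q ∈ K): if L is the minimal K-torus over b containing a — the smallest set of the form {x : χ-equations over b with K-exponents} containing a — then dim L = ldim_K(a / b), the dimension of the image of the span of a in the quotient of the K-vector space (M_{>0},·) by the span of the coordinates of b. -/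
/-!
Taking logarithms turns `(ℝ_{>0}, ·)` into the `K`-vector space `ℝ`, and `ldim_K(a/b)` into the
`K`-dimension of the span of the classes of `log aᵢ` in `ℝ ⧸ span_K (log b)`. By rank–nullity
this is `n - dim_K N`, where `N ⊆ Kⁿ` is the space of exponent vectors `c` of monomial relations
`∏ aᵢ ^ cᵢ ∈ b^K` satisfied by `a`. The rows of `q` lie in `N` since `a ∈ L`, and a `K`-basis of
`N` stays `ℝ`-independent, so `rank q ≤ dim_K N`. Conversely, the torus cut out by a basis of `N`
contains `a`, hence `L` by minimality; since `a · exp t ∈ L` exactly when `q t = 0`, the kernel of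
`q` lies in the kernel of the basis matrix, whence `dim_K N ≤ rank q`.
-/

open Real

noncomputable section

/-- ldim_K(a/b): the dimension of the image of the span of a in the quotient of the
K-vector space (ℝ_{>0},·) by the span of the coordinates of b; equivalently, the
largest size of a subfamily of a that is multiplicatively K-independent modulo the
span of b. -/
def relLdim (K : Subfield ℝ) {m n : ℕ} (b : Fin m → ℝ) (a : Fin n → ℝ) : ℕ :=
  sSup {k | ∃ s : Finset (Fin n), s.card = k ∧
    ∀ (c : Fin n → ℝ) (d : Fin m → ℝ), (∀ i, c i ∈ K) → (∀ i, d i ∈ K) →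
      (∏ i ∈ s, a i ^ c i) * (∏ i, b i ^ d i) = 1 → ∀ i ∈ s, c i = 0}

open Submodule Set

theorem sSup_card_linearIndepOn_eq_finrank_span {K V ι : Type*} [Field K] [AddCommGroup V]
    [Module K V] [Fintype ι] (v : ι → V) :
    sSup {k | ∃ s : Finset ι, s.card = k ∧ LinearIndepOn K v s} =
      Module.finrank K (span K (range v)) := by
  classical
  have hcard : ∀ s : Finset ι, LinearIndepOn K v s →
      s.card = Module.finrank K (span K (v '' s)) := fun s hs => by
    rw [image_eq_range]
    simpa [Set.finrank] using linearIndependent_iff_card_eq_finrank_span.mp hs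
  have : Module.Finite K (span K (range v)) := FiniteDimensional.span_of_finite K (finite_range v)
  obtain ⟨b, -, -, hspan, hb⟩ :=
    exists_linearIndepOn_extension (linearIndepOn_empty K v) (empty_subset univ)
  have hb' : LinearIndepOn K v (b.toFinset : Set ι) := by simpa using hb
  have hspan_b : span K (v '' b) = span K (range v) :=
    le_antisymm (span_mono (image_subset_range _ _)) (by simpa using span_le.mpr hspan)
  refine IsGreatest.csSup_eq ⟨⟨_, by rw [hcard _ hb', coe_toFinset, hspan_b], hb'⟩, ?_⟩
  rintro k ⟨s, rfl, hs⟩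
  exact hcard s hs ▸ finrank_mono (span_mono (image_subset_range _ _))

namespace Matrix

variable {R : Type*} [Field R] {m m' n : Type*} [Fintype n]

theorem rank_le_rank_of_ker_le {A : Matrix m n R} {B : Matrix m' n R}
    (h : LinearMap.ker A.mulVecLin ≤ LinearMap.ker B.mulVecLin) : B.rank ≤ A.rank := by
  have hA := LinearMap.finrank_range_add_finrank_ker A.mulVecLin
  have hB := LinearMap.finrank_range_add_finrank_ker B.mulVecLin
  have := Submodule.finrank_mono h
  unfold rank
  omega

theorem rank_le_rank_of_row_mem_span [Finite m] [Finite m'] {A : Matrix m n R} {B : Matrix m' n R}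
    (h : ∀ i, A i ∈ span R (range B.row)) : A.rank ≤ B.rank := by
  rw [rank_eq_finrank_span_row, rank_eq_finrank_span_row]
  exact finrank_mono (span_le.mpr (range_subset_iff.mpr h))

end Matrix

namespace Submodule

variable {K : Type*} [Field K] {n : ℕ} (L : Type*) [Field L] [Algebra K L]
  (N : Submodule K (Fin n → K))

def finBasisMatrix : Matrix (Fin (Module.finrank K N)) (Fin n) L :=
  Matrix.of fun k => algebraMap K L ∘ (Module.finBasis K N k : Fin n → K)

theorem rank_finBasisMatrix : (N.finBasisMatrix L).rank = Module.finrank K N := by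
  have hli : LinearIndependent K fun k => (Module.finBasis K N k : Fin n → K) :=
    (Module.finBasis K N).linearIndependent.map' N.subtype N.ker_subtype
  simpa using (linearIndependent_algebraMap_comp_iff.mpr hli).rank_matrix (M := N.finBasisMatrix L)

variable {L N}

theorem algebraMap_comp_mem_span_row_finBasisMatrix {c : Fin n → K} (hc : c ∈ N) :
    algebraMap K L ∘ c ∈ span L (range (N.finBasisMatrix L).row) := by
  have hspan : span K (range fun k => (Module.finBasis K N k : Fin n → K)) = N := by
    rw [show (fun k => (Module.finBasis K N k : Fin n → K)) = N.subtype ∘ Module.finBasis K N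
      from rfl, range_comp, ← map_span, (Module.finBasis K N).span_eq, map_top, range_subtype]
  let ι : (Fin n → K) →ₗ[K] (Fin n → L) := (Algebra.linearMap K L).compLeft (Fin n)
  have : ι c ∈ span K (range (N.finBasisMatrix L).row) := by
    rw [← hspan] at hc
    have := mem_map_of_mem (f := ι) hc
    rwa [map_span, ← range_comp] at this
  exact span_le_restrictScalars K L _ this

end Submodule

theorem prod_rpow_mul_prod_rpow_eq_one_iff {ι κ : Type*} {s : Finset ι} {t : Finset κ}
    {x : ι → ℝ} {y : κ → ℝ} (hx : ∀ i ∈ s, 0 < x i) (hy : ∀ j ∈ t, 0 < y j)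
    (c : ι → ℝ) (d : κ → ℝ) :
    (∏ i ∈ s, x i ^ c i) * (∏ j ∈ t, y j ^ d j) = 1 ↔
      ∑ i ∈ s, c i * log (x i) + ∑ j ∈ t, d j * log (y j) = 0 := by
  rw [Finset.prod_congr rfl fun i hi => rpow_def_of_pos (hx i hi) (c i),
    Finset.prod_congr rfl fun j hj => rpow_def_of_pos (hy j hj) (d j), ← exp_sum, ← exp_sum,
    ← exp_add, exp_eq_one_iff]
  simp only [mul_comm]

section LogCoordinates

variable (K : Subfield ℝ) {m n : ℕ}

def logSpan (b : Fin m → ℝ) : Submodule K ℝ := span K (range fun i => log (b i))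

def logClass (b : Fin m → ℝ) (a : Fin n → ℝ) (i : Fin n) : ℝ ⧸ logSpan K b :=
  (logSpan K b).mkQ (log (a i))

def relKer (b : Fin m → ℝ) (a : Fin n → ℝ) : Submodule K (Fin n → K) :=
  LinearMap.ker (Fintype.linearCombination K (logClass K b a))

variable {K} {a : Fin n → ℝ} {b : Fin m → ℝ}

theorem mem_logSpan_iff {x : ℝ} :
    x ∈ logSpan K b ↔ ∃ d : Fin m → ℝ, (∀ i, d i ∈ K) ∧ x + ∑ i, d i * log (b i) = 0 := by
  rw [logSpan, mem_span_range_iff_exists_fun]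
  constructor
  · rintro ⟨e, rfl⟩
    refine ⟨fun i => -e i, fun i => neg_mem (e i).2, ?_⟩
    simp [Subfield.smul_def]
  · rintro ⟨d, hd, hsum⟩
    refine ⟨fun i => -⟨d i, hd i⟩, ?_⟩
    simp only [neg_smul, Subfield.smul_def, smul_eq_mul, Finset.sum_neg_distrib]
    linarith

theorem sum_smul_logClass_eq_zero_iff (s : Finset (Fin n)) (g : Fin n → K) :
    ∑ i ∈ s, g i • logClass K b a i = 0 ↔ ∑ i ∈ s, (g i : ℝ) * log (a i) ∈ logSpan K b := by
  rw [show ∑ i ∈ s, g i • logClass K b a i = (logSpan K b).mkQ (∑ i ∈ s, g i • log (a i)) by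
    simp [logClass, map_sum], mkQ_apply, Quotient.mk_eq_zero]
  rfl

theorem linearIndepOn_logClass_iff (ha : ∀ i, 0 < a i) (hb : ∀ i, 0 < b i)
    (s : Finset (Fin n)) :
    LinearIndepOn K (logClass K b a) s ↔
      ∀ (c : Fin n → ℝ) (d : Fin m → ℝ), (∀ i, c i ∈ K) → (∀ i, d i ∈ K) →
        (∏ i ∈ s, a i ^ c i) * (∏ i, b i ^ d i) = 1 → ∀ i ∈ s, c i = 0 := by
  simp only [linearIndepOn_finset_iff, sum_smul_logClass_eq_zero_iff, mem_logSpan_iff,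
    prod_rpow_mul_prod_rpow_eq_one_iff (fun i _ => ha i) (fun i _ => hb i)]
  constructor
  · intro h c d hc hd hcd i hi
    simpa using congrArg Subtype.val (h (fun i => ⟨c i, hc i⟩) ⟨d, hd, hcd⟩ i hi)
  · rintro h g ⟨d, hd, hgd⟩ i hi
    exact Subtype.ext (h (fun i => g i) d (fun i => (g i).2) hd hgd i hi)

theorem relLdim_eq_finrank_span_logClass (ha : ∀ i, 0 < a i) (hb : ∀ i, 0 < b i) :
    relLdim K b a = Module.finrank K (span K (range (logClass K b a))) := by
  simp only [relLdim, ← linearIndepOn_logClass_iff ha hb]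
  exact sSup_card_linearIndepOn_eq_finrank_span _

theorem relLdim_add_finrank_relKer (ha : ∀ i, 0 < a i) (hb : ∀ i, 0 < b i) :
    relLdim K b a + Module.finrank K (relKer K b a) = n := by
  rw [relLdim_eq_finrank_span_logClass ha hb, ← Fintype.range_linearCombination, relKer,
    LinearMap.finrank_range_add_finrank_ker, Module.finrank_fin_fun]

theorem mem_relKer_iff (ha : ∀ i, 0 < a i) (hb : ∀ i, 0 < b i) (c : Fin n → K) :
    c ∈ relKer K b a ↔
      ∃ d : Fin m → ℝ, (∀ i, d i ∈ K) ∧ (∏ i, b i ^ d i) * (∏ i, a i ^ (c i : ℝ)) = 1 := by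
  simp only [relKer, LinearMap.mem_ker, Fintype.linearCombination_apply,
    sum_smul_logClass_eq_zero_iff, mem_logSpan_iff,
    prod_rpow_mul_prod_rpow_eq_one_iff (fun i _ => hb i) (fun i _ => ha i), add_comm]

end LogCoordinates

theorem prod_rpow_mul_prod_mul_exp_rpow_eq_one_iff {ι κ : Type*} [Fintype ι] [Fintype κ]
    {a : ι → ℝ} {b : κ → ℝ} (ha : ∀ i, 0 < a i) (hb : ∀ j, 0 < b j) {d : κ → ℝ} {c : ι → ℝ}
    (h : (∏ j, b j ^ d j) * (∏ i, a i ^ c i) = 1) (t : ι → ℝ) :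
    (∏ j, b j ^ d j) * (∏ i, (a i * exp (t i)) ^ c i) = 1 ↔ c ⬝ᵥ t = 0 := by
  rw [prod_rpow_mul_prod_rpow_eq_one_iff (fun j _ => hb j) (fun i _ => ha i)] at h
  rw [prod_rpow_mul_prod_rpow_eq_one_iff (fun j _ => hb j) (fun i _ => mul_pos (ha i) (exp_pos _))]
  simp only [log_mul (ha _).ne' (exp_pos _).ne', log_exp, mul_add, Finset.sum_add_distrib,
    dotProduct]
  constructor <;> intro <;> linarith

/-- if L is the minimal K-torus over b containing a (a K-torus over b is
cut out by monomial equations with exponents in K, with constants monomials in b),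
then dim L (the corank of the exponent matrix in the x-variables) equals ldim_K(a/b). -/
theorem stmt14 (K : Subfield ℝ) (m n : ℕ) (a : Fin n → ℝ) (b : Fin m → ℝ)
    (ha : ∀ i, 0 < a i) (hb : ∀ i, 0 < b i)
    (l : ℕ) (p : Fin l → Fin m → ℝ) (q : Fin l → Fin n → ℝ)
    (hp : ∀ j i, p j i ∈ K) (hq : ∀ j i, q j i ∈ K)
    (L : Set (Fin n → ℝ))
    (hL : L = {x : Fin n → ℝ | (∀ i, 0 < x i) ∧
      ∀ j, (∏ i, b i ^ p j i) * (∏ i, x i ^ q j i) = 1})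
    (haL : a ∈ L)
    (hmin : ∀ (l' : ℕ) (p' : Fin l' → Fin m → ℝ) (q' : Fin l' → Fin n → ℝ),
      (∀ j i, p' j i ∈ K) → (∀ j i, q' j i ∈ K) →
      (∀ j, (∏ i, b i ^ p' j i) * (∏ i, a i ^ q' j i) = 1) →
      L ⊆ {x : Fin n → ℝ | (∀ i, 0 < x i) ∧
        ∀ j, (∏ i, b i ^ p' j i) * (∏ i, x i ^ q' j i) = 1}) :
    n - (Matrix.of q).rank = relLdim K b a := by
  subst hL
  obtain ⟨-, ha_eq⟩ := haL
  set N := relKer K b a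
  set W := N.finBasisMatrix ℝ
  have hqW : (Matrix.of q).rank ≤ W.rank :=
    Matrix.rank_le_rank_of_row_mem_span fun j => algebraMap_comp_mem_span_row_finBasisMatrix
      ((mem_relKer_iff ha hb fun i => ⟨q j i, hq j i⟩).mpr ⟨p j, hp j, ha_eq j⟩)
  choose d hdK hd using fun k => (mem_relKer_iff ha hb _).mp (Module.finBasis K N k).2
  have hWq : W.rank ≤ (Matrix.of q).rank := by
    refine Matrix.rank_le_rank_of_ker_le fun t ht => ?_
    have hx := hmin _ d W hdK (fun k i => ((Module.finBasis K N k : Fin n → K) i).2) hd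
      ⟨fun i => mul_pos (ha i) (exp_pos (t i)), fun j =>
        (prod_rpow_mul_prod_mul_exp_rpow_eq_one_iff ha hb (ha_eq j) t).mpr (congrFun ht j)⟩
    exact funext fun k => (prod_rpow_mul_prod_mul_exp_rpow_eq_one_iff ha hb (hd k) t).mp (hx.2 k)
  have hrank : (Matrix.of q).rank = Module.finrank K N :=
    N.rank_finBasisMatrix ℝ ▸ le_antisymm hqW hWq
  exact Nat.sub_eq_of_eq_add (hrank ▸ (relLdim_add_finrank_relKer ha hb).symm)
end
end
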